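/- arXiv:math/0308232 — 2 statements merged into one kernel-verified Lean document; each statement's English description precedes it below -/
import Mathlib

section
/- Define on pairs of an even and odd polynomial generators the star product f ⋆ g = fg + {f, κg} where κ is an odd formal parameter with κ² = 0 and {·,·} is the canonical odd (Buttin) bracket on ℝ[x,ξ] (ξ odd, ξ²=0) given by {ξ,x} = 1, {x,x} = {ξ,ξ} = 0, extended by the graded Leibniz rules. Then ⋆ is supercommutative: f ⋆ g = (−1)^{|f||g|} g ⋆ f for homogeneous f, g. -/
/-! An even element `a` of `ℝ[x,ξ]` commutes with every `c + dξ` under `⋆`, since its κ-term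
`{a, κ(c + dξ)}` only involves `a′d`; for two odd elements `bξ, dξ` the only surviving term is the
ξκ-term `b′d − bd′`, which is antisymmetric in `b, d`. -/

open Polynomial

namespace SuperStar

variable {R : Type*} [CommRing R]

noncomputable def starProduct (f g : R[X] × R[X]) : R[X] × R[X] × R[X] × R[X] :=
  (f.1 * g.1, f.1 * g.2 + f.2 * g.1, derivative f.1 * g.2 + f.2 * derivative g.1,
    derivative f.2 * g.2 - f.2 * derivative g.2)

theorem starProduct_comm_of_snd_eq_zero_left {f : R[X] × R[X]} (hf : f.2 = 0) (g : R[X] × R[X]) :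
    starProduct f g = starProduct g f := by
  simp only [starProduct, hf, derivative_zero, Prod.mk.injEq]
  refine ⟨?_, ?_, ?_, ?_⟩ <;> ring

theorem starProduct_comm_of_snd_eq_zero_right (f : R[X] × R[X]) {g : R[X] × R[X]} (hg : g.2 = 0) :
    starProduct f g = starProduct g f :=
  (starProduct_comm_of_snd_eq_zero_left hg f).symm

theorem starProduct_anticomm_of_fst_eq_zero {f g : R[X] × R[X]} (hf : f.1 = 0) (hg : g.1 = 0) :
    starProduct f g = -starProduct g f := by
  simp only [starProduct, hf, hg, derivative_zero, Prod.neg_mk, Prod.mk.injEq]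
  refine ⟨?_, ?_, ?_, ?_⟩ <;> ring

end SuperStar

open SuperStar in
theorem stmt9 :
    let P := Polynomial ℝ
    -- (comp. of 1, ξ, κ, ξκ) of the star product of a+bξ and c+dξ
    let star : P × P → P × P → P × P × P × P := fun f g =>
      (f.1 * g.1, f.1 * g.2 + f.2 * g.1,
        (Polynomial.derivative f.1) * g.2 + f.2 * (Polynomial.derivative g.1),
        (Polynomial.derivative f.2) * g.2 - f.2 * (Polynomial.derivative g.2))
    ∀ (f g : P × P) (pf pg : ℕ),
      ((pf = 0 ∧ f.2 = 0) ∨ (pf = 1 ∧ f.1 = 0)) →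
      ((pg = 0 ∧ g.2 = 0) ∨ (pg = 1 ∧ g.1 = 0)) →
      star f g = ((-1 : ℤ) ^ (pf * pg)) • star g f := by
  intro P star f g pf pg hf hg
  change starProduct f g = _ • starProduct g f
  rcases hf with ⟨rfl, hf_even⟩ | ⟨rfl, hf_odd⟩
  · simp [starProduct_comm_of_snd_eq_zero_left hf_even]
  rcases hg with ⟨rfl, hg_even⟩ | ⟨rfl, hg_odd⟩
  · simp [starProduct_comm_of_snd_eq_zero_right f hg_even]
  · simp [starProduct_anticomm_of_fst_eq_zero hf_odd hg_odd]
end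

section
/- In the Poisson superalgebra C^∞(ℝ⁶) ⊗ Λ(ξ¹,ξ²,ξ³) with elementary brackets {p_μ, x^ν} = δ_μ^ν and {ξ^α, ξ^β} = δ^{αβ}, the odd element Q = (1/√m) (p_μ + qA_μ(x)) ξ^μ (summed over μ = 1,2,3, with Landé factor g̃ = 2) satisfies {Q, Q} = 2H where H = (1/2m)(p⃗ + qA⃗)² + (q/m)(∂_α A_β) ξ^α ξ^β (sum over α,β). -/
/- STATEMENT 16: In the Poisson superalgebra C^∞(ℝ⁶) ⊗ Λ(ξ¹,ξ²,ξ³) with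
elementary brackets {p_μ,x^ν} = δ_μ^ν and {ξ^α,ξ^β} = δ^{αβ}, the odd
element Q = (1/√m) Σ_μ (p_μ + qA_μ(x)) ξ^μ (Landé factor g̃ = 2) satisfies
{Q,Q} = 2H, where H = (1/2m) Σ_μ (p_μ + qA_μ)² + (q/m) Σ_{α,β} ∂_αA_β ξ^αξ^β.
Superfunctions are modelled by their coefficient functions indexed by
subsets of the odd generators. -/

noncomputable section

/-- phase space points: (x, p) -/
abbrev Phase (m : ℕ) := (Fin m → ℝ) × (Fin m → ℝ)

/-- superfunctions: the coefficient of ∏_{α ∈ S, increasing} ξ^α -/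
abbrev SF (m n : ℕ) := Finset (Fin n) → Phase m → ℝ

/-- Koszul sign for merging two blocks of Grassmann generators -/
def ksign {n : ℕ} (T U : Finset (Fin n)) : ℝ :=
  (-1 : ℝ) ^ ((T ×ˢ U).filter (fun ab => ab.2 < ab.1)).card

/-- supercommutative (Grassmann) multiplication -/
def gmul {m n : ℕ} (F G : SF m n) : SF m n :=
  fun S q => ∑ T ∈ S.powerset, ksign T (S \ T) * F T q * G (S \ T) q

/-- ∂/∂x^μ -/
def Dx {m n : ℕ} (μ : Fin m) (F : SF m n) : SF m n :=
  fun S q => fderiv ℝ (F S) q (Pi.single μ 1, 0)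

/-- ∂/∂p_μ -/
def Dp {m n : ℕ} (μ : Fin m) (F : SF m n) : SF m n :=
  fun S q => fderiv ℝ (F S) q (0, Pi.single μ 1)

/-- left Grassmann derivative ∂/∂ξ^α -/
def Dg {m n : ℕ} (α : Fin n) (F : SF m n) : SF m n :=
  fun S q => if α ∈ S then 0
    else (-1 : ℝ) ^ (S.filter (· < α)).card * F (insert α S) q

def evenPart {m n : ℕ} (F : SF m n) : SF m n :=
  fun S q => if S.card % 2 = 0 then F S q else 0

def oddPart {m n : ℕ} (F : SF m n) : SF m n :=
  fun S q => if S.card % 2 = 1 then F S q else 0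

/-- the even Poisson superbracket with {p_μ,x^ν}=δ, {ξ^α,ξ^β}=δ^{αβ}:
{F,G} = Σ_μ (∂_{p_μ}F ∂_{x^μ}G − ∂_{x^μ}F ∂_{p_μ}G)
      + (−1)^{|F|+1} Σ_α ∂_{ξ^α}F ∂_{ξ^α}G  (extended additively in parity) -/
def pois {m n : ℕ} (F G : SF m n) : SF m n :=
  (∑ μ : Fin m, (gmul (Dp μ F) (Dx μ G) - gmul (Dx μ F) (Dp μ G)))
  + ∑ α : Fin n,
      (gmul (Dg α (oddPart F)) (Dg α G) - gmul (Dg α (evenPart F)) (Dg α G))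

/-- embed an ordinary phase-space function as an even superfunction -/
def ev0 {m n : ℕ} (f : Phase m → ℝ) : SF m n :=
  fun S q => if S = ∅ then f q else 0

/-- the Grassmann generator ξ^α -/
def xi {m n : ℕ} (α : Fin n) : SF m n :=
  fun S _ => if S = {α} then 1 else 0

end

section Aux
variable {m n : ℕ}

lemma gmul_ev0_left (f : Phase m → ℝ) (G : SF m n) :
    gmul (ev0 f) G = fun S z => f z * G S z := by
  funext S z
  unfold gmul ev0
  rw [Finset.sum_eq_single (∅ : Finset (Fin n))]
  · simp [ksign]
  · intro T _ hne; simp [hne]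
  · intro h; exact absurd (Finset.empty_mem_powerset S) h

lemma gmul_ev0_right (F : SF m n) (f : Phase m → ℝ) :
    gmul F (ev0 f) = fun S z => F S z * f z := by
  funext S z
  unfold gmul ev0
  rw [Finset.sum_eq_single S]
  · simp [ksign]
  · intro T hT hne
    have h1 : S \ T ≠ ∅ := by
      rw [Ne, Finset.sdiff_eq_empty_iff_subset]
      intro hST
      exact hne (Finset.Subset.antisymm (Finset.mem_powerset.mp hT) hST)
    simp [h1]
  · intro h; exact absurd (Finset.mem_powerset_self S) h

lemma gxx (α β : Fin n) (S : Finset (Fin n)) (z : Phase m) :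
    gmul (xi α) (xi β) S z
      = if α ∈ S ∧ S \ {α} = {β} then ksign ({α} : Finset (Fin n)) {β} else 0 := by
  unfold gmul xi
  have : ∀ T ∈ S.powerset,
      ksign T (S \ T) * (if T = {α} then (1:ℝ) else 0) * (if S \ T = {β} then 1 else 0)
      = if T = {α} then (ksign T (S \ T) * (if S \ T = {β} then 1 else 0)) else 0 := by
    intro T _; split_ifs <;> simp_all
  rw [Finset.sum_congr rfl this, Finset.sum_ite_eq' S.powerset ({α} : Finset (Fin n))]
  simp only [Finset.mem_powerset, Finset.singleton_subset_iff]
  by_cases h1 : α ∈ S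
  · simp only [h1, if_true, true_and]
    by_cases h2 : S \ {α} = {β}
    · simp [h2]
    · simp [h2]
  · simp [h1]

lemma ksign_singleton (α β : Fin n) :
    ksign ({α} : Finset (Fin n)) {β} = if β < α then -1 else 1 := by
  unfold ksign
  rw [Finset.singleton_product_singleton, Finset.filter_singleton]
  split_ifs <;> simp_all

lemma gxx_anti (α β : Fin n) (S : Finset (Fin n)) (z : Phase m) :
    gmul (xi β) (xi α) S z = - gmul (xi α) (xi β) S z := by
  rw [gxx, gxx]
  by_cases h : α = β
  · subst h
    have : ¬ (α ∈ S ∧ S \ {α} = {α}) := by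
      rintro ⟨_, h2⟩
      have : α ∈ S \ {α} := by rw [h2]; simp
      simp at this
    simp [this]
  · by_cases hS : α ∈ S ∧ S \ {α} = {β}
    · have hSe : S = {α, β} := by
        have : S = insert α (S \ {α}) := by
          rw [← Finset.erase_eq, Finset.insert_erase hS.1]
        rw [this, hS.2]
      have hcond : β ∈ S ∧ S \ {β} = {α} := by
        subst hSe
        constructor
        · simp
        · ext x
          simp only [Finset.mem_sdiff, Finset.mem_insert, Finset.mem_singleton]
          by_cases hx : x = α <;> by_cases hy : x = β <;> simp_all
      simp only [hS, hcond, if_true, and_true, ksign_singleton]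
      rcases lt_or_gt_of_ne h with h1 | h1
      · simp [h1, not_lt_of_gt h1]
      · simp [h1, not_lt_of_gt h1]
    · have hcond : ¬ (β ∈ S ∧ S \ {β} = {α}) := by
        rintro ⟨hb, h2⟩
        apply hS
        have hSe : S = {β, α} := by
          have : S = insert β (S \ {β}) := by
            rw [← Finset.erase_eq, Finset.insert_erase hb]
          rw [this, h2]
        subst hSe
        constructor
        · simp
        · ext x
          simp only [Finset.mem_sdiff, Finset.mem_insert, Finset.mem_singleton]
          by_cases hx : x = α <;> by_cases hy : x = β <;> simp_all
      simp [hS, hcond]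

lemma gmul_key (a : ℝ) (b : Fin n → Phase m → ℝ) (ν : Fin n) (S : Finset (Fin n)) (z : Phase m) :
    gmul (fun S z => a * xi (m := m) ν S z) (fun S z => ∑ μ : Fin n, b μ z * xi μ S z) S z
      = a * ∑ μ : Fin n, b μ z * gmul (xi ν) (xi μ) S z := by
  simp only [gmul, Finset.mul_sum]
  rw [Finset.sum_comm]
  exact Finset.sum_congr rfl fun μ _ => Finset.sum_congr rfl fun T _ => by ring

lemma gmul_key' (a : ℝ) (b : Fin n → Phase m → ℝ) (ν : Fin n) (S : Finset (Fin n)) (z : Phase m) :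
    gmul (fun S z => ∑ μ : Fin n, b μ z * xi μ S z) (fun S z => a * xi (m := m) ν S z) S z
      = a * ∑ μ : Fin n, b μ z * gmul (xi μ) (xi ν) S z := by
  simp only [gmul, Finset.mul_sum, Finset.sum_mul]
  rw [Finset.sum_comm]
  exact Finset.sum_congr rfl fun μ _ => Finset.sum_congr rfl fun T _ => by ring

end Aux

lemma cderiv (m q : ℝ) (A : Fin 3 → (Fin 3 → ℝ) → ℝ) (hA : ∀ μ, ContDiff ℝ (⊤ : ℕ∞) (A μ))
    (μ : Fin 3) (z : Phase 3) :
    HasFDerivAt (fun z : Phase 3 => (Real.sqrt m)⁻¹ * (z.2 μ + q * A μ z.1))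
      ((Real.sqrt m)⁻¹ • ((ContinuousLinearMap.proj μ).comp
          (ContinuousLinearMap.snd ℝ (Fin 3 → ℝ) (Fin 3 → ℝ))
        + q • ((fderiv ℝ (A μ) z.1).comp
            (ContinuousLinearMap.fst ℝ (Fin 3 → ℝ) (Fin 3 → ℝ))))) z := by
  have hsnd : HasFDerivAt (fun z : Phase 3 => z.2 μ)
      ((ContinuousLinearMap.proj μ).comp
        (ContinuousLinearMap.snd ℝ (Fin 3 → ℝ) (Fin 3 → ℝ))) z :=
    ((ContinuousLinearMap.proj μ).comp
      (ContinuousLinearMap.snd ℝ (Fin 3 → ℝ) (Fin 3 → ℝ))).hasFDerivAt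
  have hA1 : HasFDerivAt (fun z : Phase 3 => A μ z.1)
      ((fderiv ℝ (A μ) z.1).comp (ContinuousLinearMap.fst ℝ (Fin 3 → ℝ) (Fin 3 → ℝ))) z :=
    (((hA μ).differentiable (by simp) z.1).hasFDerivAt).comp z hasFDerivAt_fst
  exact (hsnd.add (hA1.const_mul q)).const_mul _


theorem stmt16 (m q : ℝ) (hm : 0 < m) (A : Fin 3 → (Fin 3 → ℝ) → ℝ)
    (hA : ∀ μ, ContDiff ℝ (⊤ : ℕ∞) (A μ)) :
    let Q : SF 3 3 := ∑ μ : Fin 3,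
      gmul (ev0 (fun z => (Real.sqrt m)⁻¹ * (z.2 μ + q * A μ z.1))) (xi μ)
    let H : SF 3 3 :=
      ev0 (fun z => (∑ μ : Fin 3, (z.2 μ + q * A μ z.1) ^ 2) / (2 * m))
        + ∑ α : Fin 3, ∑ β : Fin 3,
            gmul (ev0 (fun z => (q / m) * fderiv ℝ (A β) z.1 (Pi.single α 1)))
              (gmul (xi α) (xi β))
    pois Q Q = (2 : ℝ) • H := by
  intro Q H
  set c : Fin 3 → Phase 3 → ℝ :=
    fun μ z => (Real.sqrt m)⁻¹ * (z.2 μ + q * A μ z.1) with hc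
  have hQdef : Q = ∑ μ : Fin 3, gmul (ev0 (c μ)) (xi μ) := rfl
  have hkey : ∀ (μ : Fin 3) (z : Phase 3), HasFDerivAt (c μ)
      ((Real.sqrt m)⁻¹ • ((ContinuousLinearMap.proj μ).comp
          (ContinuousLinearMap.snd ℝ (Fin 3 → ℝ) (Fin 3 → ℝ))
        + q • ((fderiv ℝ (A μ) z.1).comp
            (ContinuousLinearMap.fst ℝ (Fin 3 → ℝ) (Fin 3 → ℝ))))) z :=
    fun μ z => cderiv m q A hA μ z
  have hdiff : ∀ μ : Fin 3, Differentiable ℝ (c μ) :=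
    fun μ z => (hkey μ z).differentiableAt
  have hQfun : ∀ S, Q S = fun z => ∑ μ : Fin 3, c μ z * (if S = {μ} then (1:ℝ) else 0) := by
    intro S; funext z
    rw [hQdef]
    simp only [Finset.sum_apply, gmul_ev0_left, xi]
  have hdQ : ∀ S z (v : Phase 3), fderiv ℝ (Q S) z v
      = ∑ μ : Fin 3, (if S = {μ} then (1:ℝ) else 0) * fderiv ℝ (c μ) z v := by
    intro S z v
    rw [hQfun S, fderiv_fun_sum (fun μ _ => (hdiff μ z).mul_const _),
      ContinuousLinearMap.sum_apply]
    refine Finset.sum_congr rfl fun μ _ => ?_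
    rw [fderiv_mul_const (hdiff μ z)]
    rw [mul_comm]
    split_ifs <;> simp
  have hfderivp : ∀ (μ ν : Fin 3) (z : Phase 3), fderiv ℝ (c μ) z (0, Pi.single ν 1)
      = (Real.sqrt m)⁻¹ * (if μ = ν then 1 else 0) := by
    intro μ ν z
    rw [(hkey μ z).fderiv]
    simp [Pi.single_apply]
  have hfderivx : ∀ (μ ν : Fin 3) (z : Phase 3), fderiv ℝ (c μ) z (Pi.single ν 1, 0)
      = (Real.sqrt m)⁻¹ * (q * fderiv ℝ (A μ) z.1 (Pi.single ν 1)) := by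
    intro μ ν z
    rw [(hkey μ z).fderiv]
    simp
  have hDp' : ∀ ν : Fin 3, Dp ν Q = fun S z => (Real.sqrt m)⁻¹ * xi (m := 3) ν S z := by
    intro ν; funext S z
    show fderiv ℝ (Q S) z (0, Pi.single ν 1) = _
    rw [hdQ]
    simp only [hfderivp]
    have h1 : ∀ μ ∈ Finset.univ, (if S = {μ} then (1:ℝ) else 0)
        * ((Real.sqrt m)⁻¹ * (if μ = ν then 1 else 0))
        = if μ = ν then (if S = {ν} then (Real.sqrt m)⁻¹ else 0) else 0 := by
      intro μ _
      rcases eq_or_ne μ ν with rfl | hι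
      · split_ifs <;> simp_all
      · simp [hι]
    rw [Finset.sum_congr rfl h1, Finset.sum_ite_eq' Finset.univ ν]
    simp [xi]
  have hDx' : ∀ ν : Fin 3, Dx ν Q = fun S z => ∑ μ : Fin 3,
      ((Real.sqrt m)⁻¹ * (q * fderiv ℝ (A μ) z.1 (Pi.single ν 1))) * xi (m := 3) μ S z := by
    intro ν; funext S z
    show fderiv ℝ (Q S) z (Pi.single ν 1, 0) = _
    rw [hdQ]
    simp only [hfderivx]
    exact Finset.sum_congr rfl fun μ _ => mul_comm _ _
  have hodd : oddPart Q = Q := by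
    funext S z
    unfold oddPart
    split_ifs with h
    · rfl
    · rw [hQfun S]
      refine (Finset.sum_eq_zero fun μ _ => ?_).symm
      rcases eq_or_ne S {μ} with h1 | h1
      · exact absurd (by simp [h1]) h
      · simp [h1]
  have heven : evenPart Q = (fun _ _ => 0 : SF 3 3) := by
    funext S z
    unfold evenPart
    split_ifs with h
    · rw [hQfun S]
      refine Finset.sum_eq_zero fun μ _ => ?_
      rcases eq_or_ne S {μ} with h1 | h1
      · exfalso; rw [h1] at h; simp at h
      · simp [h1]
    · rfl
  have hDg0 : ∀ α : Fin 3, Dg α (fun _ _ => 0 : SF 3 3) = (fun _ _ => 0 : SF 3 3) := by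
    intro α; funext S z; simp [Dg]
  have hgmul0 : ∀ G : SF 3 3, gmul (fun _ _ => 0 : SF 3 3) G = (fun _ _ => 0 : SF 3 3) := by
    intro G; funext S z; simp [gmul]
  have hDg : ∀ α : Fin 3, Dg α Q = ev0 (c α) := by
    intro α; funext S z
    unfold Dg ev0
    by_cases hα : α ∈ S
    · have hne : S ≠ ∅ := Finset.ne_empty_of_mem hα
      simp [hα, hne]
    · simp only [hα, if_false]
      by_cases hS : S = ∅
      · subst hS
        rw [hQfun]
        simp [Finset.singleton_inj, mul_ite, Finset.sum_ite_eq]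
      · have hne : ∀ μ : Fin 3, insert α S ≠ {μ} := by
          intro μ hμ
          obtain ⟨β, hβ⟩ := Finset.nonempty_iff_ne_empty.mpr hS
          have hβm : β ∈ insert α S := Finset.mem_insert_of_mem hβ
          have hαm : α ∈ insert α S := Finset.mem_insert_self α S
          rw [hμ] at hβm hαm
          simp only [Finset.mem_singleton] at hβm hαm
          exact hα (by rw [hαm, ← hβm]; exact hβ)
        rw [hQfun]
        simp [hS, hne]
  -- now the final computation
  funext S z
  have h2H : ((2:ℝ) • H) S z = 2 * H S z := rfl
  rw [h2H]
  have hHdef : H = ev0 (fun z => (∑ μ : Fin 3, (z.2 μ + q * A μ z.1) ^ 2) / (2 * m))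
      + ∑ α : Fin 3, ∑ β : Fin 3,
          gmul (ev0 (fun z => (q / m) * fderiv ℝ (A β) z.1 (Pi.single α 1)))
            (gmul (xi α) (xi β)) := rfl
  have hHz : H S z = ev0 (fun z => (∑ μ : Fin 3, (z.2 μ + q * A μ z.1) ^ 2) / (2 * m)) S z
      + ∑ α : Fin 3, ∑ β : Fin 3,
          ((q / m) * fderiv ℝ (A β) z.1 (Pi.single α 1)) * gmul (xi α) (xi β) S z := by
    rw [hHdef]
    simp only [Pi.add_apply, Finset.sum_apply, gmul_ev0_left]
  rw [hHz]
  have hLHS : pois Q Q S z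
      = (∑ μ : Fin 3, (gmul (Dp μ Q) (Dx μ Q) S z - gmul (Dx μ Q) (Dp μ Q) S z))
        + ∑ α : Fin 3, (c α z * ev0 (c α) S z - 0) := by
    simp only [pois, Pi.add_apply, Finset.sum_apply, Pi.sub_apply]
    rw [hodd, heven]
    simp only [hDg0, hgmul0, hDg, gmul_ev0_left]
  rw [hLHS]
  simp only [hDp', hDx', gmul_key, gmul_key']
  have hs2 : (Real.sqrt m)⁻¹ * (Real.sqrt m)⁻¹ = m⁻¹ := by
    rw [← mul_inv, Real.mul_self_sqrt hm.le]
  have hP : (∑ μ : Fin 3, ((Real.sqrt m)⁻¹ * ∑ ν : Fin 3,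
        ((Real.sqrt m)⁻¹ * (q * fderiv ℝ (A ν) z.1 (Pi.single μ 1))) * gmul (xi μ) (xi ν) S z
      - (Real.sqrt m)⁻¹ * ∑ ν : Fin 3,
        ((Real.sqrt m)⁻¹ * (q * fderiv ℝ (A ν) z.1 (Pi.single μ 1))) * gmul (xi ν) (xi μ) S z))
      = 2 * ∑ α : Fin 3, ∑ β : Fin 3,
          ((q / m) * fderiv ℝ (A β) z.1 (Pi.single α 1)) * gmul (xi α) (xi β) S z := by
    rw [Finset.mul_sum]
    refine Finset.sum_congr rfl fun μ _ => ?_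
    rw [Finset.mul_sum, Finset.mul_sum, Finset.mul_sum, ← Finset.sum_sub_distrib]
    refine Finset.sum_congr rfl fun ν _ => ?_
    rw [gxx_anti μ ν]
    linear_combination (2 * q * fderiv ℝ (A ν) z.1 (Pi.single μ 1)
      * gmul (xi μ) (xi ν) S z) * hs2
  rw [hP]
  have hXi : (∑ α : Fin 3, (c α z * ev0 (c α) S z - 0))
      = 2 * (ev0 (fun z => (∑ μ : Fin 3, (z.2 μ + q * A μ z.1) ^ 2) / (2 * m)) S z) := by
    unfold ev0
    by_cases hS : S = ∅
    · simp only [hS, if_true, sub_zero]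
      rw [Finset.sum_congr rfl (fun α _ => show c α z * c α z
          = (z.2 α + q * A α z.1) ^ 2 * m⁻¹ by
        rw [hc]; simp only; linear_combination ((z.2 α + q * A α z.1) ^ 2) * hs2)]
      rw [← Finset.sum_mul]
      field_simp
    · simp [hS]
  rw [hXi]
  ring
end
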